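/- arXiv:2501.02254 — 6 statements merged into one kernel-verified Lean document; each statement's English description precedes it below -/
import Mathlib

section
/- Let x* ∈ Ω ∩ C. If x* is a global minimizer of the fractional program (P), then (x*, 1/g(x*)) is a global min-max point of the min-max problem min_{x∈ℝⁿ} max_{c∈ℝ} F̃(x,c), i.e., 1/g(x*) is a global maximizer of c ↦ F̃(x*,c) over ℝ and x* is a global minimizer of x ↦ max_{c∈ℝ} F̃(x,c) over Ω ∩ C. Conversely, if (x*, c*) ∈ (Ω ∩ C) × ℝ is a global min-max point of this min-max problem, then x* is a global minimizer of (P). -/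
open Filter Topology Set
open scoped Classical

noncomputable section

/-- `En n` is the Euclidean space `ℝⁿ`. -/
abbrev En (n : ℕ) := EuclideanSpace ℝ (Fin n)

variable {n : ℕ}

/-- `Ω := {x : g x ≠ 0}`. -/
def Omeg (g : En n → ℝ) : Set (En n) := {x | g x ≠ 0}

/-- The extended objective `F` of the fractional program (P), with `h = h₁ - h₂`:
`F x = f x / g x + (h₁ x - h₂ x)` on `Ω ∩ C` and `+∞` elsewhere. -/
def Fobj (f g h₁ h₂ : En n → ℝ) (C : Set (En n)) (x : En n) : EReal :=
  if x ∈ Omeg g ∩ C then ((f x / g x + (h₁ x - h₂ x) : ℝ) : EReal) else ⊤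

/-- The objective `F̃` of the min-max reformulation:
`F̃(x,c) = 2 c f x - c² f x g x + h x + ι_{Ω∩C}(x)`. -/
def Ftil (f g h₁ h₂ : En n → ℝ) (C : Set (En n)) (x : En n) (c : ℝ) : EReal :=
  if x ∈ Omeg g ∩ C then
    ((2 * c * f x - c ^ 2 * f x * g x + (h₁ x - h₂ x) : ℝ) : EReal) else ⊤

/-- The Fréchet subdifferential of an extended-real-valued function on `ℝⁿ`. -/
def fsubdiff (φ : En n → EReal) (x : En n) : Set (En n) :=
  {y | φ x ≠ ⊤ ∧ ∀ ε : ℝ, 0 < ε →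
      ∀ᶠ z in 𝓝 x, φ x + (((inner ℝ y (z - x) : ℝ) - ε * ‖z - x‖ : ℝ) : EReal) ≤ φ z}

/-- The convex (classical) subdifferential of a real-valued function on `ℝⁿ`. -/
def convSubdiff (φ : En n → ℝ) (x : En n) : Set (En n) :=
  {y | ∀ z, φ x + (inner ℝ y (z - x) : ℝ) ≤ φ z}

/-- The convex subdifferential of an extended-real-valued function on `ℝⁿ`. -/
def eSubdiff (φ : En n → EReal) (x : En n) : Set (En n) :=
  {y | ∀ z, φ x + (((inner ℝ y (z - x) : ℝ)) : EReal) ≤ φ z}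

/-- The convex conjugate of a real-valued function. -/
def conjF (φ : En n → ℝ) (y : En n) : EReal :=
  ⨆ x : En n, (((inner ℝ x y : ℝ) - φ x : ℝ) : EReal)

/-- The auxiliary function `Q`. -/
def Qaux (f g h₁ h₂ : En n → ℝ) (C : Set (En n)) (x y z : En n) (c : ℝ) : EReal :=
  if x ∈ C ∧ conjF g y ≠ ⊤ ∧ conjF h₂ z ≠ ⊤ then
    ((2 * c * f x + c ^ 2 * f x * ((conjF g y).toReal - (inner ℝ x y : ℝ))
        + h₁ x + (conjF h₂ z).toReal - (inner ℝ x z : ℝ) : ℝ) : EReal)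
  else ⊤

/-- The proximal operator (as a set) of `t • (f + ι_C)` at `v`. -/
def proxfC (f : En n → ℝ) (C : Set (En n)) (t : ℝ) (v : En n) : Set (En n) :=
  {z | z ∈ C ∧ ∀ w ∈ C, t * f z + ‖v - z‖ ^ 2 / 2 ≤ t * f w + ‖v - w‖ ^ 2 / 2}

/-- The standing assumptions on the data of problem (P). -/
def StandingAssumptions (f g h₁ h₂ : En n → ℝ) (C : Set (En n)) : Prop :=
  (∀ x, 0 ≤ f x) ∧ (∀ x, 0 ≤ g x) ∧
  LowerSemicontinuous f ∧ LowerSemicontinuous g ∧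
  LowerSemicontinuous (fun x => h₁ x - h₂ x) ∧
  IsClosed C ∧ (Omeg g ∩ C).Nonempty ∧
  (∀ x ∈ Omeg g, ∃ s ∈ 𝓝 x, ∃ K : NNReal, LipschitzOnWith K f s) ∧
  ConvexOn ℝ univ g ∧ ConvexOn ℝ univ h₂ ∧
  (∀ x ∈ Omeg g, ∃ δ > 0, (∀ y ∈ Metric.ball x δ, HasGradientAt h₁ (gradient h₁ y) y) ∧
      ∃ K : NNReal, LipschitzOnWith K (gradient h₁) (Metric.ball x δ))

/-- An admissible run of the alternating maximization proximal descent algorithm (AMPDA),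
including the backtracking line-search data: at iteration `k`, the trial points
`trial k j` are computed with stepsizes `αtil k * γ ^ j`, the trials `j < J k` fail the
acceptance test, and `x (k+1) = trial k (J k)` is accepted. -/
structure AMPDA (f g h₁ h₂ : En n → ℝ) (C : Set (En n)) (x0 : En n)
    (αlo αhi σ γ : ℝ) : Type where
  x : ℕ → En n
  y : ℕ → En n
  z : ℕ → En n
  c : ℕ → ℝ
  αtil : ℕ → ℝ
  J : ℕ → ℕ
  trial : ℕ → ℕ → En n
  hx0 : x 0 = x0
  hc : ∀ k, c k = 1 / g (x k)
  hy : ∀ k, y k ∈ convSubdiff g (x k)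
  hz : ∀ k, z k ∈ convSubdiff h₂ (x k)
  hαtil : ∀ k, αlo ≤ αtil k ∧ αtil k ≤ αhi
  htrial : ∀ k j, trial k j ∈ proxfC f C (αtil k * γ ^ j * c k)
      (x k - (αtil k * γ ^ j) • (gradient h₁ (x k) - z k - (c k ^ 2 * f (x k)) • y k))
  hfail : ∀ k, ∀ j < J k, ¬ (trial k j ∈ Omeg g ∧
      Qaux f g h₁ h₂ C (trial k j) (y k) (z k) (1 / g (trial k j))
          + ((σ / 2 * ‖trial k j - x k‖ ^ 2 : ℝ) : EReal)
        ≤ Fobj f g h₁ h₂ C (x k))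
  hstep : ∀ k, x (k + 1) = trial k (J k)
  hmem : ∀ k, x (k + 1) ∈ Omeg g
  haccept : ∀ k,
      Qaux f g h₁ h₂ C (x (k + 1)) (y k) (z k) (1 / g (x (k + 1)))
          + ((σ / 2 * ‖x (k + 1) - x k‖ ^ 2 : ℝ) : EReal)
        ≤ Fobj f g h₁ h₂ C (x k)

/-- The accepted stepsize `α_k` of AMPDA at iteration `k`. -/
def AMPDA.step {f g h₁ h₂ : En n → ℝ} {C : Set (En n)} {x0 : En n} {αlo αhi σ γ : ℝ}
    (A : AMPDA f g h₁ h₂ C x0 αlo αhi σ γ) (k : ℕ) : ℝ := A.αtil k * γ ^ A.J k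

/-- `x⋆` is a critical point of `F`. -/
def isCriticalPt (f g h₁ h₂ : En n → ℝ) (C : Set (En n)) (xs : En n) : Prop :=
  g xs ≠ 0 ∧
  ∃ u ∈ fsubdiff (fun x : En n => if x ∈ C then (((1 / g xs) * f x : ℝ) : EReal) else ⊤) xs,
  ∃ ys ∈ convSubdiff g xs, ∃ zs ∈ convSubdiff h₂ xs,
    (0 : En n) = u - ((1 / g xs) ^ 2 * f xs) • ys + gradient h₁ xs - zs

/-- `xb` is an `ε`-critical point of `F`. -/
def epsCrit (f g h₁ h₂ : En n → ℝ) (C : Set (En n)) (ε : ℝ) (xb : En n) : Prop :=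
  g xb ≠ 0 ∧ ∃ α : ℝ, 0 < α ∧ ∃ yb ∈ convSubdiff g xb, ∃ zb ∈ convSubdiff h₂ xb,
    (proxfC f C (α * (1 / g xb))
        (xb - α • (gradient h₁ xb - zb - ((1 / g xb) ^ 2 * f xb) • yb))).Nonempty ∧
    Metric.infDist xb (proxfC f C (α * (1 / g xb))
        (xb - α • (gradient h₁ xb - zb - ((1 / g xb) ^ 2 * f xb) • yb))) ≤ ε

/-- The product space `ℝⁿ × ℝⁿ × ℝⁿ × ℝ` on which `Q` lives. -/
abbrev E4 (n : ℕ) := En n × En n × En n × ℝ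

/-- The natural inner product on `ℝⁿ × ℝⁿ × ℝⁿ × ℝ`. -/
def inner4 (v w : E4 n) : ℝ :=
  (inner ℝ v.1 w.1 : ℝ) + (inner ℝ v.2.1 w.2.1 : ℝ) + (inner ℝ v.2.2.1 w.2.2.1 : ℝ)
    + v.2.2.2 * w.2.2.2

/-- The Fréchet subdifferential of an extended-real-valued function on
`ℝⁿ × ℝⁿ × ℝⁿ × ℝ`. -/
def fsubdiff4 (φ : E4 n → EReal) (w : E4 n) : Set (E4 n) :=
  {v | φ w ≠ ⊤ ∧ ∀ ε : ℝ, 0 < ε →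
      ∀ᶠ u in 𝓝 w, φ w + ((inner4 v (u - w) - ε * ‖u - w‖ : ℝ) : EReal) ≤ φ u}

/-- The limiting subdifferential of an extended-real-valued function on
`ℝⁿ × ℝⁿ × ℝⁿ × ℝ`. -/
def lsubdiff4 (φ : E4 n → EReal) (w : E4 n) : Set (E4 n) :=
  {v | ∃ (u : ℕ → E4 n) (q : ℕ → E4 n), Tendsto u atTop (𝓝 w) ∧
      Tendsto (fun k => φ (u k)) atTop (𝓝 (φ w)) ∧ Tendsto q atTop (𝓝 v) ∧
      ∀ k, q k ∈ fsubdiff4 φ (u k)}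

/-- The function `Q` as a function on the product space. -/
def QfunOf (f g h₁ h₂ : En n → ℝ) (C : Set (En n)) : E4 n → EReal :=
  fun w => Qaux f g h₁ h₂ C w.1 w.2.1 w.2.2.1 w.2.2.2

/-- The Kurdyka-Łojasiewicz property of `φ` at `w`. -/
def KLAt4 (φ : E4 n → EReal) (w : E4 n) : Prop :=
  ∃ ε : EReal, 0 < ε ∧ ∃ δ : ℝ, 0 < δ ∧ ∃ ψ ψ' : ℝ → ℝ,
    ψ 0 = 0 ∧
    ContinuousOn ψ {t : ℝ | 0 ≤ t ∧ (t : EReal) < ε} ∧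
    ConcaveOn ℝ {t : ℝ | 0 ≤ t ∧ (t : EReal) < ε} ψ ∧
    (∀ t : ℝ, 0 < t → (t : EReal) < ε → HasDerivAt ψ (ψ' t) t ∧ 0 < ψ' t) ∧
    ∀ u : E4 n, ‖u - w‖ < δ → φ w < φ u → φ u < φ w + ε →
      ∀ p ∈ lsubdiff4 φ u, 1 ≤ ψ' ((φ u - φ w).toReal) * ‖p‖

/-- The ℓ¹-norm on `ℝⁿ`. -/
def l1 (x : En n) : ℝ := ∑ i, |x i|

/-- The ℓ²-norm on `ℝⁿ`. -/
def l2 (x : En n) : ℝ := ‖x‖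

/-- `S_μ`, the set of vectors with at most `μ` nonzero entries. -/
def Smu (μ : ℕ) : Set (En n) := {z | {j | z j ≠ 0}.ncard ≤ μ}

/-- `h₁` for the robust signal recovery models: `(λ/2) ‖A x - b‖²`. -/
def h1L {m : ℕ} (A : En n →ₗ[ℝ] En m) (b : En m) (lam : ℝ) (x : En n) : ℝ :=
  lam / 2 * ‖A x - b‖ ^ 2

/-- `h₂` for the robust signal recovery models:
`(λ/2) ‖T_μ (A x - b)‖² = (λ/2) (‖A x - b‖² - dist²(A x - b, S_μ))`. -/
def h2L {m : ℕ} (A : En n →ₗ[ℝ] En m) (b : En m) (lam : ℝ) (μ : ℕ) (x : En n) : ℝ :=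
  lam / 2 * (‖A x - b‖ ^ 2 - (Metric.infDist (A x - b) (Smu μ)) ^ 2)

/-- The box constraint `{x : x̲ ≤ x ≤ x̄}`. -/
def box (xlo xhi : En n) : Set (En n) := {x | ∀ i, xlo i ≤ x i ∧ x i ≤ xhi i}


theorem two_mul_mul_sub_sq_mul_mul_le_div {a b : ℝ} (c : ℝ) (ha : 0 ≤ a) (hb : 0 < b) :
    2 * c * a - c ^ 2 * a * b ≤ a / b := by
  rw [le_div_iff₀ hb]
  -- `a - (2 c a - c² a b) b = a (1 - c b)²`
  nlinarith [mul_nonneg ha (sq_nonneg (1 - c * b))]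

theorem two_mul_inv_mul_sub_inv_sq_mul_mul {b : ℝ} (a : ℝ) (hb : b ≠ 0) :
    2 * (1 / b) * a - (1 / b) ^ 2 * a * b = a / b := by
  field_simp
  ring

section MinMax

variable {f g h₁ h₂ : En n → ℝ} {C : Set (En n)} {x : En n}

theorem Ftil_inv_eq_Fobj (hx : x ∈ Omeg g ∩ C) :
    Ftil f g h₁ h₂ C x (1 / g x) = Fobj f g h₁ h₂ C x := by
  simp only [Ftil, Fobj, if_pos hx, two_mul_inv_mul_sub_inv_sq_mul_mul (f x) hx.1]

theorem Ftil_le_Ftil_inv (hf : 0 ≤ f x) (hg : 0 ≤ g x) (hx : x ∈ Omeg g ∩ C) (c : ℝ) :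
    Ftil f g h₁ h₂ C x c ≤ Ftil f g h₁ h₂ C x (1 / g x) := by
  have hgx : 0 < g x := hg.lt_of_ne (Ne.symm hx.1)
  simp only [Ftil, if_pos hx, two_mul_inv_mul_sub_inv_sq_mul_mul (f x) hx.1,
    EReal.coe_le_coe_iff, add_le_add_iff_right]
  exact two_mul_mul_sub_sq_mul_mul_le_div c hf hgx

theorem iSup_Ftil_eq_Fobj (hf : 0 ≤ f x) (hg : 0 ≤ g x) :
    ⨆ c : ℝ, Ftil f g h₁ h₂ C x c = Fobj f g h₁ h₂ C x := by
  by_cases hx : x ∈ Omeg g ∩ C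
  · rw [← Ftil_inv_eq_Fobj hx]
    exact le_antisymm (iSup_le (Ftil_le_Ftil_inv hf hg hx)) (le_iSup _ _)
  · simp only [Ftil, Fobj, if_neg hx, iSup_const]

end MinMax

/-- equivalence of global minimizers of (P) and global min-max points of the
min-max reformulation. -/
theorem statement0 (f g h₁ h₂ : En n → ℝ) (C : Set (En n))
    (hSA : StandingAssumptions f g h₁ h₂ C)
    (xs : En n) (hxs : xs ∈ Omeg g ∩ C) :
    ((∀ x ∈ Omeg g ∩ C, Fobj f g h₁ h₂ C xs ≤ Fobj f g h₁ h₂ C x) →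
      (∀ c : ℝ, Ftil f g h₁ h₂ C xs c ≤ Ftil f g h₁ h₂ C xs (1 / g xs)) ∧
      (∀ x ∈ Omeg g ∩ C,
        (⨆ c : ℝ, Ftil f g h₁ h₂ C xs c) ≤ ⨆ c : ℝ, Ftil f g h₁ h₂ C x c)) ∧
    (∀ cs : ℝ,
      ((∀ c : ℝ, Ftil f g h₁ h₂ C xs c ≤ Ftil f g h₁ h₂ C xs cs) ∧
       (∀ x ∈ Omeg g ∩ C,
        (⨆ c : ℝ, Ftil f g h₁ h₂ C xs c) ≤ ⨆ c : ℝ, Ftil f g h₁ h₂ C x c)) →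
      ∀ x ∈ Omeg g ∩ C, Fobj f g h₁ h₂ C xs ≤ Fobj f g h₁ h₂ C x) := by
  have hsup : ∀ x, ⨆ c : ℝ, Ftil f g h₁ h₂ C x c = Fobj f g h₁ h₂ C x :=
    fun x => iSup_Ftil_eq_Fobj (hSA.1 x) (hSA.2.1 x)
  refine ⟨fun hmin => ⟨Ftil_le_Ftil_inv (hSA.1 xs) (hSA.2.1 xs) hxs, ?_⟩, ?_⟩
  · simpa only [hsup] using hmin
  · rintro cs ⟨-, hminmax⟩
    simpa only [hsup] using hminmax

end
end

section
/- Let x* ∈ Ω ∩ C. If 0 ∈ ∂̂F(x*), then with c* = 1/g(x*) one has both 0 ∈ ∂̂_x F̃(x*, c*) (the Fréchet subdifferential of x ↦ F̃(x, c*) at x*) and 0 = ∇_c F̃(x*, c*) (the derivative of c ↦ F̃(x*, c) at c*). Conversely, if a pair (x*, c*) ∈ (Ω∩C) × ℝ satisfies 0 ∈ ∂̂_x F̃(x*, c*) and 0 = ∇_c F̃(x*, c*), then 0 ∈ ∂̂F(x*). -/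
open Filter Topology Set
open scoped Classical

noncomputable section

variable {n : ℕ}

/-!
Since `2 c f - c² f g = f / g - (f / g) (1 - c g)²`, the map `x ↦ F̃(x, c)` is a minorant of `F`
touching it at `x⋆` exactly when `f(x⋆) (1 - c g(x⋆)) = 0`, which is the equation
`∇_c F̃(x⋆, c) = 0`; Fréchet subgradients of a touching minorant are subgradients of `F`.
Conversely, for `c⋆ = 1 / g(x⋆)` the gap `(f / g) (1 - g / g(x⋆))²` is `o(‖x - x⋆‖)`, because
`f / g` is continuous at `x⋆` and the convex `g` is locally Lipschitz, and a perturbation of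
order `o(‖x - x⋆‖)` does not change Fréchet subgradients.
-/

theorem fsubdiff_subset_of_eventually_le_add {φ ψ : En n → EReal} {x : En n} (hx : φ x = ψ x)
    (h : ∀ ε : ℝ, 0 < ε → ∀ᶠ z in 𝓝 x, ψ z ≤ φ z + ((ε * ‖z - x‖ : ℝ) : EReal)) :
    fsubdiff ψ x ⊆ fsubdiff φ x := by
  rintro y ⟨hne, hψ⟩
  refine ⟨hx ▸ hne, fun ε hε => ?_⟩
  filter_upwards [hψ (ε / 2) (half_pos hε), h (ε / 2) (half_pos hε)] with z hψz hφz
  rw [hx, ← (EReal.addLECancellable_coe (ε / 2 * ‖z - x‖)).add_le_add_iff_right, add_assoc,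
    ← EReal.coe_add]
  calc ψ x + ((inner ℝ y (z - x) - ε * ‖z - x‖ + ε / 2 * ‖z - x‖ : ℝ) : EReal)
      = ψ x + ((inner ℝ y (z - x) - ε / 2 * ‖z - x‖ : ℝ) : EReal) := by ring_nf
    _ ≤ φ z + ((ε / 2 * ‖z - x‖ : ℝ) : EReal) := hψz.trans hφz

theorem div_sub_quadratic_eq {a b c : ℝ} (hb : b ≠ 0) :
    a / b - (2 * c * a - c ^ 2 * a * b) = a / b * (1 - c * b) ^ 2 := by
  field_simp
  ring

theorem quadratic_le_div {a b c : ℝ} (ha : 0 ≤ a) (hb : 0 < b) :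
    2 * c * a - c ^ 2 * a * b ≤ a / b := by
  have := div_sub_quadratic_eq (a := a) (c := c) hb.ne'
  nlinarith [mul_nonneg (div_nonneg ha hb.le) (sq_nonneg (1 - c * b))]

theorem hasDerivAt_quadratic (a b d c : ℝ) :
    HasDerivAt (fun c : ℝ => 2 * c * a - c ^ 2 * a * b + d) (2 * a - 2 * c * a * b) c := by
  have h₁ : HasDerivAt (fun c : ℝ => 2 * c * a) (2 * a) c := by
    simpa using ((hasDerivAt_id c).const_mul 2).mul_const a
  have h₂ : HasDerivAt (fun c : ℝ => c ^ 2 * a * b) (2 * c * a * b) c := by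
    simpa using ((hasDerivAt_pow 2 c).mul_const a).mul_const b
  simpa using (h₁.sub h₂).add_const d

theorem isLittleO_div_mul_one_sub_sq {E : Type*} [SeminormedAddCommGroup E] {f g : E → ℝ}
    {x : E} {t : Set E} {K : NNReal} (hf : ContinuousAt f x) (hgK : LipschitzOnWith K g t)
    (ht : t ∈ 𝓝 x) (hgx : g x ≠ 0) :
    (fun z => f z / g z * (1 - 1 / g x * g z) ^ 2) =o[𝓝 x] (fun z => ‖z - x‖) := by
  have hg : ContinuousAt g x := hgK.continuousOn.continuousAt ht
  have hbounded : (fun z => f z / g z) =O[𝓝 x] (fun _ => (1 : ℝ)) :=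
    (hf.div hg hgx).tendsto.isBigO_one ℝ
  have hsmall : (fun z => 1 - 1 / g x * g z) =o[𝓝 x] (fun _ => (1 : ℝ)) := by
    refine (Asymptotics.isLittleO_one_iff ℝ).2 ?_
    simpa [hgx] using (hg.const_mul (1 / g x)).const_sub 1
  have hlip : (fun z => 1 - 1 / g x * g z) =O[𝓝 x] (fun z => ‖z - x‖) := by
    refine Asymptotics.isBigO_iff.2 ⟨K / |g x|, ?_⟩
    filter_upwards [ht] with z hz
    have hdist := hgK.dist_le_mul z hz x (mem_of_mem_nhds ht)
    rw [Real.dist_eq, dist_eq_norm] at hdist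
    have : 1 - 1 / g x * g z = -(g z - g x) / g x := by field_simp; ring
    rw [this, Real.norm_eq_abs, norm_norm, abs_div, abs_neg, div_mul_eq_mul_div,
      div_le_div_iff_of_pos_right (abs_pos.2 hgx)]
    exact hdist
  simpa [sq, mul_assoc] using (hbounded.mul_isLittleO hsmall).mul_isBigO hlip

section

variable {f g h₁ h₂ : En n → ℝ} {C : Set (En n)}

theorem Ftil_le_Fobj (hf : ∀ x, 0 ≤ f x) (hg : ∀ x, 0 ≤ g x) (x : En n) (c : ℝ) :
    Ftil f g h₁ h₂ C x c ≤ Fobj f g h₁ h₂ C x := by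
  unfold Ftil Fobj
  split_ifs with hx
  · exact EReal.coe_le_coe_iff.2
      (by linarith [quadratic_le_div (c := c) (hf x) ((hg x).lt_of_ne' hx.1)])
  · exact le_rfl

theorem Ftil_eq_Fobj {x : En n} {c : ℝ} (h : f x * (1 - c * g x) = 0) :
    Ftil f g h₁ h₂ C x c = Fobj f g h₁ h₂ C x := by
  unfold Ftil Fobj
  split_ifs with hx
  · have hgap : f x / g x * (1 - c * g x) ^ 2 = 0 := by
      rw [show f x / g x * (1 - c * g x) ^ 2 = (1 - c * g x) / g x * (f x * (1 - c * g x)) by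
        ring, h, mul_zero]
    have := div_sub_quadratic_eq (a := f x) (c := c) hx.1
    exact_mod_cast (by linarith : _ = f x / g x + (h₁ x - h₂ x))
  · rfl

theorem eventually_Fobj_le_Ftil_add {xs : En n} {t : Set (En n)} {K : NNReal}
    (hf : ContinuousAt f xs) (hgK : LipschitzOnWith K g t) (ht : t ∈ 𝓝 xs) (hxs : g xs ≠ 0)
    (ε : ℝ) (hε : 0 < ε) :
    ∀ᶠ z in 𝓝 xs, Fobj f g h₁ h₂ C z ≤
      Ftil f g h₁ h₂ C z (1 / g xs) + ((ε * ‖z - xs‖ : ℝ) : EReal) := by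
  filter_upwards [(isLittleO_div_mul_one_sub_sq hf hgK ht hxs).bound hε] with z hgap
  unfold Fobj Ftil
  split_ifs with hz
  · have := div_sub_quadratic_eq (a := f z) (c := 1 / g xs) hz.1
    rw [Real.norm_eq_abs, norm_norm] at hgap
    exact_mod_cast (by linarith [le_abs_self (f z / g z * (1 - 1 / g xs * g z) ^ 2)] :
      f z / g z + (h₁ z - h₂ z) ≤ _)
  · exact (EReal.top_add_coe _).ge

end

/-- equivalence of Fréchet stationary points of `F` and stationary points
of the min-max reformulation. -/
theorem statement2 (f g h₁ h₂ : En n → ℝ) (C : Set (En n))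
    (hSA : StandingAssumptions f g h₁ h₂ C)
    (xs : En n) (hxs : xs ∈ Omeg g ∩ C) :
    ((0 : En n) ∈ fsubdiff (Fobj f g h₁ h₂ C) xs →
      (0 : En n) ∈ fsubdiff (fun x => Ftil f g h₁ h₂ C x (1 / g xs)) xs ∧
      HasDerivAt (fun c : ℝ => 2 * c * f xs - c ^ 2 * f xs * g xs + (h₁ xs - h₂ xs))
        0 (1 / g xs)) ∧
    (∀ cs : ℝ,
      ((0 : En n) ∈ fsubdiff (fun x => Ftil f g h₁ h₂ C x cs) xs ∧
       HasDerivAt (fun c : ℝ => 2 * c * f xs - c ^ 2 * f xs * g xs + (h₁ xs - h₂ xs))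
        0 cs) →
      (0 : En n) ∈ fsubdiff (Fobj f g h₁ h₂ C) xs) := by
  obtain ⟨hf0, hg0, -, -, -, -, -, hfLip, hgConvex, -, -⟩ := hSA
  have hgxs : g xs ≠ 0 := hxs.1
  obtain ⟨s, hs, Kf, hKf⟩ := hfLip xs hgxs
  obtain ⟨K, t, ht, hKg⟩ := hgConvex.locallyLipschitz xs
  have hderiv := hasDerivAt_quadratic (f xs) (g xs) (h₁ xs - h₂ xs)
  refine ⟨fun h0 => ⟨?_, ?_⟩, fun cs ⟨h0, hD⟩ => ?_⟩
  · refine fsubdiff_subset_of_eventually_le_add (Ftil_eq_Fobj ?_)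
      (eventually_Fobj_le_Ftil_add (hKf.continuousOn.continuousAt hs) hKg ht hgxs) h0
    field_simp
    ring
  · convert hderiv (1 / g xs) using 1
    field_simp
    ring
  · have hcrit : f xs * (1 - cs * g xs) = 0 := by
      linarith [(hderiv cs).unique hD]
    refine fsubdiff_subset_of_eventually_le_add (Ftil_eq_Fobj hcrit).symm
      (fun ε hε => Eventually.of_forall fun z => ?_) h0
    exact (Ftil_le_Fobj hf0 hg0 z cs).trans
      (le_add_of_nonneg_right (by exact_mod_cast by positivity))

end
end

section
/- If 0 ∈ ∂̂F(x*), then with c* = 1/g(x*) it holds that 0 ∈ ∂̂(c* f + ι_C)(x*) − c*² f(x*) ∂g(x*) + ∇h₁(x*) − ∂h₂(x*). Moreover, if in addition g and h₂ are differentiable at x*, then conversely this inclusion with c* = 1/g(x*) implies 0 ∈ ∂̂F(x*). -/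
open Filter Topology Set
open scoped Classical

noncomputable section

variable {n : ℕ}

/-! Near `x⋆` the function `g` is positive, and there
`F = (c⋆ f + ι_C) + h₁ - h₂ - P` with `P z = f z / (g x⋆ g z) * (g z - g x⋆)`.
The factor `f / (g x⋆ g)` is continuous and nonnegative at `x⋆`, so for every `y ∈ ∂g(x⋆)`
the vector `c⋆² f(x⋆) y` is a Fréchet subgradient of `P` at `x⋆`, and it is the gradient of `P`
when `g` is differentiable there. Both implications then follow from the elementary sum rule
`∂̂φ(x) + ∂̂ψ(x) ⊆ ∂̂(φ + ψ)(x)` for real-valued `ψ`, applied to `F` and to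
`c⋆ f + ι_C = F + P + h₂ - h₁`. -/

open scoped RealInnerProductSpace

theorem ConvexOn.exists_subgradient_strongDual {E : Type*} [NormedAddCommGroup E]
    [NormedSpace ℝ E] {g : E → ℝ} (hg : ConvexOn ℝ univ g) (hgc : Continuous g) (x : E) :
    ∃ ℓ : StrongDual ℝ E, ∀ z, g x + ℓ (z - x) ≤ g z := by
  have hopen : IsOpen {p : E × ℝ | p.1 ∈ univ ∧ g p.1 < p.2} :=
    (isOpen_univ.preimage continuous_fst).inter
      (isOpen_lt (hgc.comp continuous_fst) continuous_snd)
  obtain ⟨φ, hφ⟩ := geometric_hahn_banach_open_point hg.convex_strict_epigraph hopen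
    (fun h => lt_irrefl _ h.2 : (x, g x) ∉ {p : E × ℝ | p.1 ∈ univ ∧ g p.1 < p.2})
  set β := φ (0, 1)
  have hφ_apply (v : E) (t : ℝ) : φ (v, t) = φ (v, 0) + t * β := by
    have hvt : (v, t) = (v, 0) + t • ((0 : E), (1 : ℝ)) := by ext <;> simp
    rw [hvt, map_add, map_smul, smul_eq_mul]
  have hsep (z : E) (s : ℝ) (hs : 0 < s) : φ (z, 0) + (g z + s) * β < φ (x, 0) + g x * β := by
    have := hφ (z, g z + s) ⟨mem_univ z, by linarith⟩
    rwa [hφ_apply z, hφ_apply x] at this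
  -- the separating hyperplane is not vertical, so it is the graph of an affine minorant of `g`
  have hβ : β < 0 := by nlinarith [hsep x 1 one_pos]
  have hsupp (z : E) : φ (z, 0) - φ (x, 0) ≤ (g z - g x) * -β := by
    by_contra! h
    obtain ⟨s, hs_pos, hs⟩ : ∃ s, 0 < s ∧ s * -β = φ (z, 0) - φ (x, 0) - (g z - g x) * -β :=
      ⟨_, div_pos (sub_pos.mpr h) (neg_pos.mpr hβ), div_mul_cancel₀ _ (by linarith)⟩
    linarith [hsep z s hs_pos]
  refine ⟨(-β)⁻¹ • φ.comp (ContinuousLinearMap.inl ℝ E ℝ), fun z => ?_⟩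
  have hℓ : ((-β)⁻¹ • φ.comp (ContinuousLinearMap.inl ℝ E ℝ)) (z - x)
      = (-β)⁻¹ * (φ (z, 0) - φ (x, 0)) := by
    simp only [FunLike.coe_smul, Pi.smul_apply, ContinuousLinearMap.comp_apply,
      map_sub, ContinuousLinearMap.inl_apply, smul_eq_mul, mul_sub]
  have : (-β)⁻¹ * (φ (z, 0) - φ (x, 0)) ≤ g z - g x := by
    rw [inv_mul_le_iff₀ (by linarith)]
    linarith [hsupp z]
  linarith

theorem eq_of_subgradient_of_hasGradientAt {E : Type*} [NormedAddCommGroup E]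
    [InnerProductSpace ℝ E] [CompleteSpace E] {g : E → ℝ} {x y G : E}
    (hy : ∀ z, g x + ⟪y, z - x⟫ ≤ g z) (hG : HasGradientAt g G x) : y = G := by
  have hmin : IsLocalMin (fun z => g z - InnerProductSpace.toDual ℝ E y z) x :=
    Filter.Eventually.of_forall fun z => by
      simp only [InnerProductSpace.toDual_apply_apply]
      linarith [hy z, inner_sub_right (𝕜 := ℝ) y z x]
  have hderiv := hmin.hasFDerivAt_eq_zero
    ((hasGradientAt_iff_hasFDerivAt.mp hG).sub (InnerProductSpace.toDual ℝ E y).hasFDerivAt)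
  exact ((InnerProductSpace.toDual ℝ E).injective (sub_eq_zero.mp hderiv)).symm

theorem HasGradientAt.neg {E : Type*} [NormedAddCommGroup E] [InnerProductSpace ℝ E]
    [CompleteSpace E] {f : E → ℝ} {G x : E} (hf : HasGradientAt f G x) :
    HasGradientAt (fun z => -f z) (-G) x := by
  rw [hasGradientAt_iff_hasFDerivAt, map_neg]
  exact (hasGradientAt_iff_hasFDerivAt.mp hf).neg

theorem HasGradientAt.sub {E : Type*} [NormedAddCommGroup E] [InnerProductSpace ℝ E]
    [CompleteSpace E] {f g : E → ℝ} {F G x : E} (hf : HasGradientAt f F x)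
    (hg : HasGradientAt g G x) : HasGradientAt (fun z => f z - g z) (F - G) x := by
  rw [hasGradientAt_iff_hasFDerivAt, map_sub]
  exact (hasGradientAt_iff_hasFDerivAt.mp hf).sub (hasGradientAt_iff_hasFDerivAt.mp hg)

theorem HasGradientAt.continuousAt_mul_sub_self {E : Type*} [NormedAddCommGroup E]
    [InnerProductSpace ℝ E] [CompleteSpace E] {A g : E → ℝ} {G x : E} (hA : ContinuousAt A x)
    (hg : HasGradientAt g G x) :
    HasGradientAt (fun z => A z * (g z - g x)) (A x • G) x := by
  rw [hasGradientAt_iff_isLittleO] at hg ⊢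
  have hA_bdd : A =O[𝓝 x] fun _ => (1 : ℝ) := hA.tendsto.isBigO_one ℝ
  have hA_sub : (fun z => A z - A x) =o[𝓝 x] fun _ => (1 : ℝ) :=
    (Asymptotics.isLittleO_one_iff ℝ).mpr (tendsto_sub_nhds_zero_iff.mpr hA.tendsto)
  have hinner : (fun z => ⟪G, z - x⟫) =O[𝓝 x] fun z => ‖z - x‖ :=
    Asymptotics.IsBigO.of_bound ‖G‖ (Eventually.of_forall fun z => by
      simpa using abs_real_inner_le_norm G (z - x))
  have hsum := (hA_bdd.mul_isLittleO hg.norm_right).add (hA_sub.mul_isBigO hinner)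
  refine (hsum.congr (fun z => ?_) fun z => one_mul _).trans_isBigO
    (Asymptotics.isBigO_norm_left.mpr (Asymptotics.isBigO_refl _ _))
  simp only [sub_self, mul_zero, real_inner_smul_left]
  ring

theorem exists_mem_convSubdiff {g : En n → ℝ} (hg : ConvexOn ℝ univ g) (x : En n) :
    ∃ y, y ∈ convSubdiff g x := by
  obtain ⟨ℓ, hℓ⟩ := hg.exists_subgradient_strongDual hg.locallyLipschitz.continuous x
  refine ⟨(InnerProductSpace.toDual ℝ (En n)).symm ℓ, fun z => ?_⟩
  simpa only [InnerProductSpace.toDual_symm_apply] using hℓ z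

section FrechetSubdifferential

variable {φ ψ : En n → EReal} {f g : En n → ℝ} {x y v G : En n}

theorem fsubdiff_congr (h : φ =ᶠ[𝓝 x] ψ) : fsubdiff φ x = fsubdiff ψ x := by
  ext y
  simp only [fsubdiff, mem_ofPred_eq, h.eq_of_nhds]
  refine and_congr_right fun _ => forall₂_congr fun ε _ => eventually_congr ?_
  filter_upwards [h] with z hz
  rw [hz]

theorem mem_fsubdiff_coe_iff :
    v ∈ fsubdiff (fun z => (f z : EReal)) x ↔
      ∀ ε > 0, ∀ᶠ z in 𝓝 x, f x + ⟪v, z - x⟫ - ε * ‖z - x‖ ≤ f z := by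
  simp only [fsubdiff, mem_ofPred_eq, ← EReal.coe_add, EReal.coe_le_coe_iff, add_sub_assoc]
  exact and_iff_right (EReal.coe_ne_top _)

theorem add_mem_fsubdiff_add_coe (hy : y ∈ fsubdiff φ x)
    (hv : v ∈ fsubdiff (fun z => (f z : EReal)) x) :
    y + v ∈ fsubdiff (fun z => φ z + f z) x := by
  refine ⟨EReal.add_ne_top hy.1 (EReal.coe_ne_top _), fun ε hε => ?_⟩
  filter_upwards [hy.2 (ε / 2) (half_pos hε), hv.2 (ε / 2) (half_pos hε)] with z hyz hvz
  calc φ x + f x + ((⟪y + v, z - x⟫ - ε * ‖z - x‖ : ℝ) : EReal)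
      = (φ x + ((⟪y, z - x⟫ - ε / 2 * ‖z - x‖ : ℝ) : EReal))
          + (f x + ((⟪v, z - x⟫ - ε / 2 * ‖z - x‖ : ℝ) : EReal)) := by
        rw [inner_add_left, show ⟪y, z - x⟫ + ⟪v, z - x⟫ - ε * ‖z - x‖
          = (⟪y, z - x⟫ - ε / 2 * ‖z - x‖) + (⟪v, z - x⟫ - ε / 2 * ‖z - x‖) by ring,
          EReal.coe_add]
        abel
    _ ≤ φ z + f z := add_le_add hyz hvz

theorem add_mem_fsubdiff_coe_add (hy : y ∈ fsubdiff (fun z => (f z : EReal)) x)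
    (hv : v ∈ fsubdiff (fun z => (g z : EReal)) x) :
    y + v ∈ fsubdiff (fun z => ((f z + g z : ℝ) : EReal)) x := by
  simpa only [EReal.coe_add] using add_mem_fsubdiff_add_coe hy hv

theorem mem_fsubdiff_of_mem_convSubdiff (hy : y ∈ convSubdiff f x) :
    y ∈ fsubdiff (fun z => (f z : EReal)) x :=
  mem_fsubdiff_coe_iff.mpr fun ε hε => Eventually.of_forall fun z => by
    nlinarith [hy z, norm_nonneg (z - x)]

theorem HasGradientAt.mem_fsubdiff (hf : HasGradientAt f G x) :
    G ∈ fsubdiff (fun z => (f z : EReal)) x := by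
  refine mem_fsubdiff_coe_iff.mpr fun ε hε => ?_
  filter_upwards [(hasGradientAt_iff_isLittleO.mp hf).def hε] with z hz
  rw [Real.norm_eq_abs] at hz
  linarith [neg_abs_le (f z - f x - ⟪G, z - x⟫)]

theorem smul_mem_fsubdiff_mul_sub_self {A : En n → ℝ} (hA : ContinuousAt A x)
    (hA_nonneg : ∀ᶠ z in 𝓝 x, 0 ≤ A z) (hy : y ∈ convSubdiff g x) :
    A x • y ∈ fsubdiff (fun z => ((A z * (g z - g x) : ℝ) : EReal)) x := by
  refine mem_fsubdiff_coe_iff.mpr fun ε hε => ?_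
  have hδ : 0 < ε / (‖y‖ + 1) := by positivity
  filter_upwards [hA_nonneg, Metric.tendsto_nhds.mp hA.tendsto _ hδ] with z hAz hAxz
  rw [Real.dist_eq] at hAxz
  have hcs := abs_real_inner_le_norm y (z - x)
  have herr : |A z - A x| * |⟪y, z - x⟫| ≤ ε * ‖z - x‖ := by
    calc |A z - A x| * |⟪y, z - x⟫| ≤ ε / (‖y‖ + 1) * ((‖y‖ + 1) * ‖z - x‖) := by
          gcongr; linarith [norm_nonneg (z - x)]
      _ = ε * ‖z - x‖ := by field_simp
  rw [← abs_mul] at herr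
  have hmono : A z * ⟪y, z - x⟫ ≤ A z * (g z - g x) :=
    mul_le_mul_of_nonneg_left (by linarith [hy z]) hAz
  simp only [sub_self, mul_zero, zero_add, real_inner_smul_left]
  linarith [neg_abs_le ((A z - A x) * ⟪y, z - x⟫), sub_mul (A z) (A x) ⟪y, z - x⟫]

end FrechetSubdifferential

section FractionalProgram

variable {f g h₁ h₂ : En n → ℝ} {C : Set (En n)} {xs z : En n}

theorem Fobj_eq_add (hxs : g xs ≠ 0) (hz : g z ≠ 0) :
    Fobj f g h₁ h₂ C z = (if z ∈ C then (((1 / g xs) * f z : ℝ) : EReal) else ⊤)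
      + ((h₁ z - h₂ z - f z / (g xs * g z) * (g z - g xs) : ℝ) : EReal) := by
  by_cases hzC : z ∈ C
  · rw [Fobj, if_pos hzC, if_pos (show z ∈ Omeg g ∩ C from ⟨hz, hzC⟩), ← EReal.coe_add]
    congr 1
    field_simp
    ring
  · rw [Fobj, if_neg hzC, if_neg (show z ∉ Omeg g ∩ C from fun h => hzC h.2), EReal.top_add_coe]

theorem indicator_eq_Fobj_add (hxs : g xs ≠ 0) (hz : g z ≠ 0) :
    (if z ∈ C then (((1 / g xs) * f z : ℝ) : EReal) else ⊤) = Fobj f g h₁ h₂ C z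
      + ((f z / (g xs * g z) * (g z - g xs) + h₂ z + -h₁ z : ℝ) : EReal) := by
  by_cases hzC : z ∈ C
  · rw [Fobj, if_pos hzC, if_pos (show z ∈ Omeg g ∩ C from ⟨hz, hzC⟩), ← EReal.coe_add]
    congr 1
    field_simp
    ring
  · rw [Fobj, if_neg hzC, if_neg (show z ∉ Omeg g ∩ C from fun h => hzC h.2), EReal.top_add_coe]

end FractionalProgram

/-- the first-order necessary condition derived from `0 ∈ ∂̂F(x⋆)`, and its
sufficiency when `g` and `h₂` are differentiable at `x⋆`. -/
theorem statement3 (f g h₁ h₂ : En n → ℝ) (C : Set (En n))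
    (hSA : StandingAssumptions f g h₁ h₂ C)
    (xs : En n) (hxs : xs ∈ Omeg g ∩ C) :
    ((0 : En n) ∈ fsubdiff (Fobj f g h₁ h₂ C) xs →
      ∃ u ∈ fsubdiff
          (fun x : En n => if x ∈ C then (((1 / g xs) * f x : ℝ) : EReal) else ⊤) xs,
      ∃ yg ∈ convSubdiff g xs, ∃ zh ∈ convSubdiff h₂ xs,
        (0 : En n) = u - ((1 / g xs) ^ 2 * f xs) • yg + gradient h₁ xs - zh) ∧
    ((HasGradientAt g (gradient g xs) xs ∧ HasGradientAt h₂ (gradient h₂ xs) xs) →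
      (∃ u ∈ fsubdiff
          (fun x : En n => if x ∈ C then (((1 / g xs) * f x : ℝ) : EReal) else ⊤) xs,
       ∃ yg ∈ convSubdiff g xs, ∃ zh ∈ convSubdiff h₂ xs,
        (0 : En n) = u - ((1 / g xs) ^ 2 * f xs) • yg + gradient h₁ xs - zh) →
      (0 : En n) ∈ fsubdiff (Fobj f g h₁ h₂ C) xs) := by
  obtain ⟨hxsΩ, -⟩ := hxs
  obtain ⟨hf_nonneg, hg_nonneg, -, -, -, -, -, hf_lip, hg_conv, hh₂_conv, hh₁_diff⟩ := hSA
  have hg_cont : Continuous g := hg_conv.locallyLipschitz.continuous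
  have hΩ : ∀ᶠ z in 𝓝 xs, g z ≠ 0 := hg_cont.continuousAt.eventually_ne hxsΩ
  obtain ⟨s, hs, K, hfK⟩ := hf_lip xs hxsΩ
  have hA : ContinuousAt (fun z => f z / (g xs * g z)) xs :=
    (hfK.continuousOn.continuousAt hs).div (continuousAt_const.mul hg_cont.continuousAt)
      (mul_ne_zero hxsΩ hxsΩ)
  have hA_xs : f xs / (g xs * g xs) = (1 / g xs) ^ 2 * f xs := by field_simp
  obtain ⟨δ, hδ, hh₁_grad, -⟩ := hh₁_diff xs hxsΩ
  have hh₁ : HasGradientAt h₁ (gradient h₁ xs) xs := hh₁_grad xs (Metric.mem_ball_self hδ)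
  constructor
  · intro h0
    obtain ⟨yg, hyg⟩ := exists_mem_convSubdiff hg_conv xs
    obtain ⟨zh, hzh⟩ := exists_mem_convSubdiff hh₂_conv xs
    have hA_nonneg : ∀ᶠ z in 𝓝 xs, 0 ≤ f z / (g xs * g z) := Eventually.of_forall fun z =>
      div_nonneg (hf_nonneg z) (mul_nonneg (hg_nonneg xs) (hg_nonneg z))
    have hP := smul_mem_fsubdiff_mul_sub_self hA hA_nonneg hyg
    have hrest := add_mem_fsubdiff_coe_add (add_mem_fsubdiff_coe_add hP
      (mem_fsubdiff_of_mem_convSubdiff hzh)) hh₁.neg.mem_fsubdiff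
    refine ⟨(f xs / (g xs * g xs)) • yg + zh + -gradient h₁ xs, ?_, yg, hyg, zh, hzh, ?_⟩
    · rw [fsubdiff_congr (hΩ.mono fun z hz => indicator_eq_Fobj_add hxsΩ hz)]
      simpa only [zero_add] using add_mem_fsubdiff_add_coe h0 hrest
    · rw [hA_xs]
      module
  · rintro ⟨hg_grad, hh₂_grad⟩ ⟨u, hu, yg, hyg, zh, hzh, hcrit⟩
    rw [eq_of_subgradient_of_hasGradientAt hyg hg_grad,
      eq_of_subgradient_of_hasGradientAt hzh hh₂_grad] at hcrit
    have hψ := ((hh₁.sub hh₂_grad).sub (hg_grad.continuousAt_mul_sub_self hA)).mem_fsubdiff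
    rw [fsubdiff_congr (hΩ.mono fun z hz => Fobj_eq_add hxsΩ hz)]
    convert add_mem_fsubdiff_add_coe hu hψ using 1
    rw [hA_xs, hcrit]
    module
end
end

section
/- Suppose O := {x ∈ ℝⁿ : f(x) = g(x) = 0} is nonempty. If the initial point x⁰ ∈ dom F satisfies F(x⁰) < inf{ liminf_{z→x} F(z) : x ∈ O }, then the level set X := {x ∈ dom F : F(x) ≤ F(x⁰)} is closed. -/
open Filter Topology Set
open scoped Classical

noncomputable section

variable {n : ℕ}

/-!
Write `h = h₁ - h₂` and `r = F(x⁰)`. Where `g > 0` and `f ≥ 0`, the inequality `f/g + h ≤ r` says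
exactly that `r - h ≥ 0` and `f ≤ (r - h) g`. This condition is closed: `f` is lower semicontinuous,
and `(r - h) g` is a product of nonnegative upper semicontinuous functions (`g` is convex, hence
continuous). So a limit `x̄` of the level set satisfies it as well. If `g x̄ > 0`, then `x̄` is in the
level set again; if `g x̄ = 0`, then `f x̄ = 0` and `liminf_{z→x̄} F(z) ≤ r`, which the hypothesis
on the points of `O` forbids.
-/

theorem isClosed_setOf_nonneg_and_le_mul {X : Type*} [TopologicalSpace X] {f a g : X → ℝ}
    (hf : LowerSemicontinuous f) (ha : UpperSemicontinuous a) (hg : UpperSemicontinuous g)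
    (hg0 : ∀ x, 0 ≤ g x) : IsClosed {x | 0 ≤ a x ∧ f x ≤ a x * g x} := by
  refine isOpen_compl_iff.mp (isOpen_iff_mem_nhds.mpr fun x hx => ?_)
  simp only [mem_compl_iff, mem_ofPred_eq, not_and, not_le] at hx
  rcases lt_or_ge (a x) 0 with hax | hax
  · filter_upwards [ha x 0 hax] with z hz using fun h => h.1.not_gt hz
  obtain ⟨c, hc, hcf⟩ := exists_between (hx hax)
  have hcont : ContinuousAt (fun δ : ℝ => (a x + δ) * (g x + δ)) 0 := by fun_prop
  obtain ⟨δ, hδc, hδ⟩ : ∃ δ : ℝ, (a x + δ) * (g x + δ) < c ∧ 0 < δ :=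
    ((eventually_nhdsWithin_of_eventually_nhds
      (hcont.eventually (gt_mem_nhds (by simpa using hc)))).and
        (self_mem_nhdsWithin (s := Ioi 0))).exists
  filter_upwards [hf x c hcf, ha x _ (lt_add_of_pos_right _ hδ), hg x _ (lt_add_of_pos_right _ hδ)]
    with z hfz haz hgz
  rintro ⟨haz0, hle⟩
  have : a z * g z ≤ (a x + δ) * (g x + δ) :=
    mul_le_mul haz.le hgz.le (hg0 z) (by linarith)
  linarith

theorem liminf_nhds_le_of_mem_closure {X β : Type*} [TopologicalSpace X] [CompleteLattice β]
    {φ : X → β} {b : β} {x : X} (hx : x ∈ closure {y | φ y ≤ b}) : liminf φ (𝓝 x) ≤ b :=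
  liminf_le_of_frequently_le' (mem_closure_iff_frequently.mp hx)

theorem div_add_le_iff_le_sub_mul {a b c r : ℝ} (ha : 0 ≤ a) (hb : 0 < b) :
    a / b + c ≤ r ↔ 0 ≤ r - c ∧ a ≤ (r - c) * b := by
  rw [← le_sub_iff_add_le, div_le_iff₀ hb]
  exact ⟨fun h => ⟨nonneg_of_mul_nonneg_left (ha.trans h) hb, h⟩, And.right⟩

theorem Fobj_le_coe_iff {f g h₁ h₂ : En n → ℝ} {C : Set (En n)} {x : En n} {r : ℝ} :
    Fobj f g h₁ h₂ C x ≤ r ↔ x ∈ Omeg g ∩ C ∧ f x / g x + (h₁ x - h₂ x) ≤ r := by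
  unfold Fobj
  split_ifs with hx
  · simp only [hx, true_and]
    norm_cast
  · simp [hx]

theorem isClosed_setOf_Fobj_le {f g h₁ h₂ : En n → ℝ} {C : Set (En n)} (hf0 : ∀ x, 0 ≤ f x)
    (hg0 : ∀ x, 0 ≤ g x) (hf : LowerSemicontinuous f) (hg : UpperSemicontinuous g)
    (hh : LowerSemicontinuous fun x => h₁ x - h₂ x) (hC : IsClosed C) {r : ℝ}
    (hr : ∀ x, f x = 0 → g x = 0 → (r : EReal) < liminf (Fobj f g h₁ h₂ C) (𝓝 x)) :
    IsClosed {x | Fobj f g h₁ h₂ C x ≤ r} := by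
  set K := C ∩ {x | 0 ≤ r - (h₁ x - h₂ x) ∧ f x ≤ (r - (h₁ x - h₂ x)) * g x}
  have hK : IsClosed K := by
    refine hC.inter (isClosed_setOf_nonneg_and_le_mul hf ?_ hg hg0)
    exact (continuous_const.sub continuous_id).comp_lowerSemicontinuous_antitone hh
      fun _ _ h => sub_le_sub_left h r
  have hgpos : ∀ x ∈ Omeg g, 0 < g x := fun x hx => (hg0 x).lt_of_ne' hx
  have hsub : {x | Fobj f g h₁ h₂ C x ≤ r} ⊆ K := by
    intro x hx
    obtain ⟨⟨hxg, hxC⟩, hle⟩ := Fobj_le_coe_iff.mp hx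
    exact ⟨hxC, (div_add_le_iff_le_sub_mul (hf0 x) (hgpos x hxg)).mp hle⟩
  refine closure_subset_iff_isClosed.mp fun x hx => ?_
  obtain ⟨hxC, hxr, hfx⟩ := closure_minimal hsub hK hx
  by_cases hgx : g x = 0
  · have hfx0 : f x = 0 := le_antisymm (by simpa [hgx] using hfx) (hf0 x)
    exact absurd (liminf_nhds_le_of_mem_closure hx) (hr x hfx0 hgx).not_ge
  · exact Fobj_le_coe_iff.mpr
      ⟨⟨hgx, hxC⟩, (div_add_le_iff_le_sub_mul (hf0 x) (hgpos x hgx)).mpr ⟨hxr, hfx⟩⟩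

theorem statement5_general (f g h₁ h₂ : En n → ℝ) (C : Set (En n))
    (hSA : StandingAssumptions f g h₁ h₂ C)
    (x0 : En n) (hdom : Fobj f g h₁ h₂ C x0 ≠ ⊤)
    (hlt : Fobj f g h₁ h₂ C x0 <
      ⨅ x ∈ {x : En n | f x = 0 ∧ g x = 0},
        Filter.liminf (Fobj f g h₁ h₂ C) (𝓝 x)) :
    IsClosed {x : En n | Fobj f g h₁ h₂ C x ≤ Fobj f g h₁ h₂ C x0} := by
  obtain ⟨hf0, hg0, hf, -, hh, hC, -, -, hgconv, -, -⟩ := hSA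
  have hg : Continuous g := continuousOn_univ.mp (hgconv.continuousOn isOpen_univ)
  have hx0 : x0 ∈ Omeg g ∩ C := by
    by_contra hx0
    exact hdom (if_neg hx0)
  have hFx0 : Fobj f g h₁ h₂ C x0 = ((f x0 / g x0 + (h₁ x0 - h₂ x0) : ℝ) : EReal) := if_pos hx0
  rw [hFx0] at hlt ⊢
  exact isClosed_setOf_Fobj_le hf0 hg0 hf hg.upperSemicontinuous hh hC
    fun x hfx hgx => hlt.trans_le (biInf_le _ ⟨hfx, hgx⟩)

/-- if `O = {x : f x = 0 ∧ g x = 0}` is nonempty and the initial point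
`x⁰ ∈ dom F` satisfies `F(x⁰) < inf {liminf_{z→x} F(z) : x ∈ O}`, then the level set
`{x ∈ dom F : F(x) ≤ F(x⁰)}` is closed. -/
theorem statement5 (f g h₁ h₂ : En n → ℝ) (C : Set (En n))
    (hSA : StandingAssumptions f g h₁ h₂ C)
    (hO : {x : En n | f x = 0 ∧ g x = 0}.Nonempty)
    (x0 : En n) (hdom : Fobj f g h₁ h₂ C x0 ≠ ⊤)
    (hlt : Fobj f g h₁ h₂ C x0 <
      ⨅ x ∈ {x : En n | f x = 0 ∧ g x = 0},
        Filter.liminf (Fobj f g h₁ h₂ C) (𝓝 x)) :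
    IsClosed {x : En n | Fobj f g h₁ h₂ C x ≤ Fobj f g h₁ h₂ C x0} :=
  statement5_general f g h₁ h₂ C hSA x0 hdom hlt

end
end

section
/- Suppose the level set X := {x ∈ dom F : F(x) ≤ F(x⁰)} is compact, and let {(x^k, y^k, z^k, c_k)} be generated by AMPDA. Then: (i) the sequence {(x^k, y^k, z^k, c_k)} is bounded; (ii) the sequence {F(x^k)} is monotonically nonincreasing with F_∞ := inf_k F(x^k) = lim_{k→∞} F(x^k) finite, and ‖x^{k+1} − x^k‖ → 0 as k → ∞. -/
open Filter Topology Set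
open scoped Classical

noncomputable section

variable {n : ℕ}

/-! By Fenchel–Young, `F x ≤ Q(x, y, z, 1/g x)` whenever `y ∈ ∂g(x')` and `z ∈ ∂h₂(x'')`, so the
acceptance test of AMPDA gives the sufficient descent
`F(x^{k+1}) + (σ/2)‖x^{k+1} - x^k‖² ≤ F(x^k)`. The iterates therefore stay in the compact level set,
on which `F ≥ h` is bounded below (`h` is lower semicontinuous), `1/g` is continuous, and the
subgradients of the continuous convex functions `g`, `h₂` are bounded. A bounded-below
nonincreasing sequence converges, and its decrements, which dominate `(σ/2)‖x^{k+1} - x^k‖²`,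
tend to `0`. -/

def Freal (f g h₁ h₂ : En n → ℝ) (x : En n) : ℝ := f x / g x + (h₁ x - h₂ x)

section Objective

variable {f g h₁ h₂ : En n → ℝ} {C : Set (En n)} {x : En n}

lemma Fobj_of_mem (hx : x ∈ Omeg g ∩ C) : Fobj f g h₁ h₂ C x = Freal f g h₁ h₂ x :=
  if_pos hx

lemma levelSet_subset_dom {x0 : En n} (hx0 : x0 ∈ Omeg g ∩ C) :
    {x | Fobj f g h₁ h₂ C x ≤ Fobj f g h₁ h₂ C x0} ⊆ Omeg g ∩ C := by
  intro x hx
  by_contra h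
  have hx' : Fobj f g h₁ h₂ C x0 = ⊤ := top_le_iff.1 ((if_neg h).symm.trans_le hx)
  rw [Fobj_of_mem hx0] at hx'
  exact EReal.coe_ne_top _ hx'

lemma mem_of_Qaux_ne_top {y z : En n} {c : ℝ} (h : Qaux f g h₁ h₂ C x y z c ≠ ⊤) : x ∈ C := by
  by_contra hC
  exact h (if_neg fun hcond => hC hcond.1)

end Objective

section Subgradient

variable {φ : En n → ℝ}

lemma conjF_eq_of_mem_convSubdiff {x y : En n} (h : y ∈ convSubdiff φ x) :
    conjF φ y = ((inner ℝ x y - φ x : ℝ) : EReal) := by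
  refine le_antisymm (iSup_le fun z => ?_) (le_iSup (fun z => ((inner ℝ z y - φ z : ℝ) : EReal)) x)
  have hz := h z
  rw [inner_sub_right, real_inner_comm z y, real_inner_comm x y] at hz
  exact EReal.coe_le_coe_iff.2 (by linarith)

/-- Fenchel–Young; the subgradient makes `conjF φ y` finite, so `toReal` loses nothing. -/
lemma inner_sub_le_toReal_conjF {x' y : En n} (h : y ∈ convSubdiff φ x') (x : En n) :
    inner ℝ x y - φ x ≤ (conjF φ y).toReal := by
  have hx : ((inner ℝ x y - φ x : ℝ) : EReal) ≤ conjF φ y :=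
    le_iSup (fun z => ((inner ℝ z y - φ z : ℝ) : EReal)) x
  rw [conjF_eq_of_mem_convSubdiff h] at hx ⊢
  exact EReal.coe_le_coe_iff.1 hx

lemma conjF_ne_top_of_mem_convSubdiff {x y : En n} (h : y ∈ convSubdiff φ x) : conjF φ y ≠ ⊤ := by
  rw [conjF_eq_of_mem_convSubdiff h]
  exact EReal.coe_ne_top _

lemma IsCompact.exists_norm_le_of_mem_convSubdiff (hφ : Continuous φ) {s : Set (En n)}
    (hs : IsCompact s) : ∃ B : ℝ, ∀ x ∈ s, ∀ y ∈ convSubdiff φ x, ‖y‖ ≤ B := by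
  obtain ⟨B, hB⟩ := (hs.cthickening (r := 1)).exists_bound_of_continuousOn hφ.continuousOn
  refine ⟨2 * B, fun x hx y hy => ?_⟩
  -- test the subgradient inequality in the unit direction `y / ‖y‖`
  set u : En n := ‖y‖⁻¹ • y
  have hu : ‖u‖ ≤ 1 ∧ inner ℝ y u = ‖y‖ := by
    rcases eq_or_ne y 0 with rfl | hy0
    · simp [u]
    · refine ⟨by simp [u, norm_smul, hy0], ?_⟩
      rw [real_inner_smul_right, real_inner_self_eq_norm_sq]
      field_simp [norm_ne_zero_iff.2 hy0]
  have hxu : x + u ∈ Metric.cthickening 1 s :=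
    Metric.closedBall_subset_cthickening hx 1 (by simpa [dist_eq_norm] using hu.1)
  have hsub := hy (x + u)
  rw [add_sub_cancel_left, hu.2] at hsub
  have h1 := hB _ hxu
  have h2 := hB x (Metric.self_subset_cthickening s hx)
  rw [Real.norm_eq_abs, abs_le] at h1 h2
  linarith

end Subgradient

lemma Fobj_le_Qaux {f g h₁ h₂ : En n → ℝ} {C : Set (En n)} {x x' x'' y z : En n}
    (hf : 0 ≤ f x) (hx : x ∈ Omeg g ∩ C)
    (hy : y ∈ convSubdiff g x') (hz : z ∈ convSubdiff h₂ x'') :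
    Fobj f g h₁ h₂ C x ≤ Qaux f g h₁ h₂ C x y z (1 / g x) := by
  have hcond : x ∈ C ∧ conjF g y ≠ ⊤ ∧ conjF h₂ z ≠ ⊤ :=
    ⟨hx.2, conjF_ne_top_of_mem_convSubdiff hy, conjF_ne_top_of_mem_convSubdiff hz⟩
  rw [Fobj_of_mem hx, Qaux, if_pos hcond, EReal.coe_le_coe_iff, Freal]
  set c := 1 / g x
  have hcg : c * g x = 1 := one_div_mul_cancel hx.1
  have hgy := inner_sub_le_toReal_conjF hy x
  have hhz := inner_sub_le_toReal_conjF hz x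
  -- `c² f (g*(y) - ⟨x, y⟩) ≥ -c² f g x = -c f`
  have hkey : -(c * f x) ≤ c ^ 2 * f x * ((conjF g y).toReal - inner ℝ x y) := by
    have := mul_le_mul_of_nonneg_left (show -g x ≤ (conjF g y).toReal - inner ℝ x y by linarith)
      (mul_nonneg (sq_nonneg c) hf)
    linear_combination this + c * f x * hcg
  have hfg : f x / g x = c * f x := by ring
  linarith

lemma tendsto_coe_ciInf_of_antitone {a : ℕ → ℝ} (ha : Antitone a) (hb : BddBelow (range a)) :
    Tendsto (fun k => (a k : EReal)) atTop (𝓝 ((⨅ k, a k : ℝ) : EReal)) ∧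
      ((⨅ k, a k : ℝ) : EReal) = ⨅ k, (a k : EReal) := by
  have hreal := EReal.tendsto_coe.2 (tendsto_atTop_ciInf ha hb)
  exact ⟨hreal, tendsto_nhds_unique hreal
    (tendsto_atTop_iInf fun i j hij => EReal.coe_le_coe_iff.2 (ha hij))⟩

lemma tendsto_zero_of_succ_add_le {a d : ℕ → ℝ} (hd : ∀ k, 0 ≤ d k)
    (h : ∀ k, a (k + 1) + d k ≤ a k) (hb : BddBelow (range a)) : Tendsto d atTop (𝓝 0) := by
  have hlim := tendsto_atTop_ciInf (antitone_nat_of_succ_le fun k => by linarith [h k, hd k]) hb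
  have hdiff : Tendsto (fun k => a k - a (k + 1)) atTop (𝓝 0) := by
    simpa using hlim.sub (hlim.comp (tendsto_add_atTop_nat 1))
  exact squeeze_zero hd (fun k => by linarith [h k]) hdiff

namespace AMPDA

variable {f g h₁ h₂ : En n → ℝ} {C : Set (En n)} {x0 : En n} {αlo αhi σ γ : ℝ}
  (A : AMPDA f g h₁ h₂ C x0 αlo αhi σ γ)

lemma x_mem (hx0 : x0 ∈ Omeg g ∩ C) (k : ℕ) : A.x k ∈ Omeg g ∩ C := by
  induction k with
  | zero => rwa [A.hx0]
  | succ k ih =>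
    have hQ : Qaux f g h₁ h₂ C (A.x (k + 1)) (A.y k) (A.z k) (1 / g (A.x (k + 1))) ≠ ⊤ := by
      intro hQ
      have hacc := A.haccept k
      rw [hQ, EReal.top_add_coe, Fobj_of_mem ih, top_le_iff] at hacc
      exact EReal.coe_ne_top _ hacc
    exact ⟨A.hmem k, mem_of_Qaux_ne_top hQ⟩

lemma Freal_succ_add_le (hf0 : ∀ x, 0 ≤ f x) (hx0 : x0 ∈ Omeg g ∩ C) (k : ℕ) :
    Freal f g h₁ h₂ (A.x (k + 1)) + σ / 2 * ‖A.x (k + 1) - A.x k‖ ^ 2 ≤ Freal f g h₁ h₂ (A.x k) := by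
  have h := (add_le_add_left (Fobj_le_Qaux (hf0 _) (A.x_mem hx0 (k + 1)) (A.hy k) (A.hz k)) _).trans
    (A.haccept k)
  rw [Fobj_of_mem (A.x_mem hx0 (k + 1)), Fobj_of_mem (A.x_mem hx0 k)] at h
  exact_mod_cast h

lemma Freal_antitone (hf0 : ∀ x, 0 ≤ f x) (hx0 : x0 ∈ Omeg g ∩ C) (hσ : 0 ≤ σ) :
    Antitone fun k => Freal f g h₁ h₂ (A.x k) :=
  antitone_nat_of_succ_le fun k => by
    nlinarith [A.Freal_succ_add_le hf0 hx0 k, sq_nonneg ‖A.x (k + 1) - A.x k‖]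

lemma x_mem_levelSet (hf0 : ∀ x, 0 ≤ f x) (hx0 : x0 ∈ Omeg g ∩ C) (hσ : 0 ≤ σ) (k : ℕ) :
    A.x k ∈ {x | Fobj f g h₁ h₂ C x ≤ Fobj f g h₁ h₂ C x0} := by
  show Fobj f g h₁ h₂ C (A.x k) ≤ Fobj f g h₁ h₂ C x0
  rw [Fobj_of_mem (A.x_mem hx0 k), Fobj_of_mem hx0, EReal.coe_le_coe_iff]
  simpa only [A.hx0] using A.Freal_antitone hf0 hx0 hσ (Nat.zero_le k)

lemma bddBelow_Freal (hf0 : ∀ x, 0 ≤ f x) (hg0 : ∀ x, 0 ≤ g x)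
    (hh : LowerSemicontinuous fun x => h₁ x - h₂ x) (hx0 : x0 ∈ Omeg g ∩ C) (hσ : 0 ≤ σ)
    (hcomp : IsCompact {x | Fobj f g h₁ h₂ C x ≤ Fobj f g h₁ h₂ C x0}) :
    BddBelow (range fun k => Freal f g h₁ h₂ (A.x k)) := by
  obtain ⟨m, hm⟩ := (hh.lowerSemicontinuousOn _).bddBelow_of_isCompact hcomp
  refine ⟨m, forall_mem_range.2 fun k => (hm ⟨_, A.x_mem_levelSet hf0 hx0 hσ k, rfl⟩).trans ?_⟩
  exact le_add_of_nonneg_left (div_nonneg (hf0 _) (hg0 _))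

lemma exists_bound (hf0 : ∀ x, 0 ≤ f x) (hx0 : x0 ∈ Omeg g ∩ C) (hσ : 0 ≤ σ)
    (hg : ConvexOn ℝ univ g) (hh₂ : ConvexOn ℝ univ h₂)
    (hcomp : IsCompact {x | Fobj f g h₁ h₂ C x ≤ Fobj f g h₁ h₂ C x0}) :
    ∃ M : ℝ, ∀ k, ‖A.x k‖ ≤ M ∧ ‖A.y k‖ ≤ M ∧ ‖A.z k‖ ≤ M ∧ |A.c k| ≤ M := by
  have hX := A.x_mem_levelSet hf0 hx0 hσ
  have hg_cont : Continuous g := continuousOn_univ.1 (hg.continuousOn isOpen_univ)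
  obtain ⟨Mx, hMx⟩ := isBounded_iff_forall_norm_le.1 hcomp.isBounded
  obtain ⟨My, hMy⟩ := hcomp.exists_norm_le_of_mem_convSubdiff hg_cont
  obtain ⟨Mz, hMz⟩ := hcomp.exists_norm_le_of_mem_convSubdiff
    (continuousOn_univ.1 (hh₂.continuousOn isOpen_univ))
  obtain ⟨Mc, hMc⟩ := hcomp.exists_bound_of_continuousOn (continuousOn_const.div
    hg_cont.continuousOn fun x hx => (levelSet_subset_dom hx0 hx).1)
  refine ⟨max (max Mx My) (max Mz Mc), fun k => ⟨?_, ?_, ?_, ?_⟩⟩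
  · exact (hMx _ (hX k)).trans ((le_max_left _ _).trans (le_max_left _ _))
  · exact (hMy _ (hX k) _ (A.hy k)).trans ((le_max_right _ _).trans (le_max_left _ _))
  · exact (hMz _ (hX k) _ (A.hz k)).trans ((le_max_left _ _).trans (le_max_right _ _))
  · rw [A.hc k, ← Real.norm_eq_abs]
    exact (hMc _ (hX k)).trans ((le_max_right _ _).trans (le_max_right _ _))

lemma tendsto_norm_succ_sub (hf0 : ∀ x, 0 ≤ f x) (hx0 : x0 ∈ Omeg g ∩ C) (hσ : 0 < σ)
    (hbdd : BddBelow (range fun k => Freal f g h₁ h₂ (A.x k))) :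
    Tendsto (fun k => ‖A.x (k + 1) - A.x k‖) atTop (𝓝 0) := by
  have hsq := tendsto_zero_of_succ_add_le (fun k => by positivity)
    (A.Freal_succ_add_le hf0 hx0) hbdd
  have hroot := (hsq.const_mul (2 / σ)).sqrt
  rw [mul_zero, Real.sqrt_zero] at hroot
  refine hroot.congr fun k => ?_
  field_simp
  exact Real.sqrt_sq (norm_nonneg _)

end AMPDA

theorem statement8_general (f g h₁ h₂ : En n → ℝ) (C : Set (En n))
    (hSA : StandingAssumptions f g h₁ h₂ C)
    (x0 : En n) (hx0 : x0 ∈ Omeg g ∩ C)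
    (αlo αhi σ γ : ℝ)
    (hσ : 0 < σ)
    (hcomp : IsCompact {x : En n | Fobj f g h₁ h₂ C x ≤ Fobj f g h₁ h₂ C x0})
    (A : AMPDA f g h₁ h₂ C x0 αlo αhi σ γ) :
    (∃ M : ℝ, ∀ k : ℕ, ‖A.x k‖ ≤ M ∧ ‖A.y k‖ ≤ M ∧ ‖A.z k‖ ≤ M ∧ |A.c k| ≤ M) ∧
    (∀ k : ℕ, Fobj f g h₁ h₂ C (A.x (k + 1)) ≤ Fobj f g h₁ h₂ C (A.x k)) ∧
    (∃ Finf : ℝ,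
      Tendsto (fun k => Fobj f g h₁ h₂ C (A.x k)) atTop (𝓝 ((Finf : ℝ) : EReal)) ∧
      ((Finf : ℝ) : EReal) = ⨅ k : ℕ, Fobj f g h₁ h₂ C (A.x k)) ∧
    Tendsto (fun k => ‖A.x (k + 1) - A.x k‖) atTop (𝓝 0) := by
  obtain ⟨hf0, hg0, -, -, hh, -, -, -, hg, hh₂, -⟩ := hSA
  have hF : ∀ k, Fobj f g h₁ h₂ C (A.x k) = Freal f g h₁ h₂ (A.x k) :=
    fun k => Fobj_of_mem (A.x_mem hx0 k)
  have hanti := A.Freal_antitone hf0 hx0 hσ.le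
  have hbdd := A.bddBelow_Freal hf0 hg0 hh hx0 hσ.le hcomp
  refine ⟨A.exists_bound hf0 hx0 hσ.le hg hh₂ hcomp, fun k => ?_, ?_,
    A.tendsto_norm_succ_sub hf0 hx0 hσ hbdd⟩
  · rw [hF, hF]
    exact EReal.coe_le_coe_iff.2 (hanti k.le_succ)
  · simp only [hF]
    exact ⟨_, tendsto_coe_ciInf_of_antitone hanti hbdd⟩

/-- under compactness of the level set, the AMPDA sequence
`(x^k, y^k, z^k, c_k)` is bounded, `F(x^k)` is nonincreasing and converges to the finite
limit `F_∞ = inf_k F(x^k)`, and `‖x^{k+1} - x^k‖ → 0`. -/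
theorem statement8 (f g h₁ h₂ : En n → ℝ) (C : Set (En n))
    (hSA : StandingAssumptions f g h₁ h₂ C)
    (x0 : En n) (hx0 : x0 ∈ Omeg g ∩ C)
    (αlo αhi σ γ : ℝ) (hαlo : 0 < αlo) (hαhi : αlo ≤ αhi)
    (hσ : 0 < σ) (hγ0 : 0 < γ) (hγ1 : γ < 1)
    (hcomp : IsCompact {x : En n | Fobj f g h₁ h₂ C x ≤ Fobj f g h₁ h₂ C x0})
    (A : AMPDA f g h₁ h₂ C x0 αlo αhi σ γ) :
    (∃ M : ℝ, ∀ k : ℕ, ‖A.x k‖ ≤ M ∧ ‖A.y k‖ ≤ M ∧ ‖A.z k‖ ≤ M ∧ |A.c k| ≤ M) ∧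
    (∀ k : ℕ, Fobj f g h₁ h₂ C (A.x (k + 1)) ≤ Fobj f g h₁ h₂ C (A.x k)) ∧
    (∃ Finf : ℝ,
      Tendsto (fun k => Fobj f g h₁ h₂ C (A.x k)) atTop (𝓝 ((Finf : ℝ) : EReal)) ∧
      ((Finf : ℝ) : EReal) = ⨅ k : ℕ, Fobj f g h₁ h₂ C (A.x k)) ∧
    Tendsto (fun k => ‖A.x (k + 1) - A.x k‖) atTop (𝓝 0) :=
  statement8_general f g h₁ h₂ C hSA x0 hx0 αlo αhi σ γ hσ hcomp A

end
end

section
/- Let φ_l, φ_c, φ_r : ℝⁿ → (−∞,+∞] and define Φ : ℝⁿ → (−∞,+∞] by Φ(x) = φ_l(x)·(φ_c(x) + φ_r(x)) for x ∈ dom(φ_l) ∩ dom(φ_c) ∩ dom(φ_r) and Φ(x) = +∞ otherwise. Let x̄ ∈ dom(φ_l) ∩ dom(φ_c) ∩ dom(φ_r), and assume: (i) φ_l is nonnegative and locally Lipschitz continuous around x̄ relative to dom(φ_l); (ii) φ_c is convex with ∂φ_c(x̄) ≠ ∅; (iii) φ_r is continuous at x̄ relative to dom(φ_r). Then ∂̂Φ(x̄)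 ⊇ ∂̂ψ(x̄) + φ_l(x̄)·∂φ_c(x̄), where ψ(x) := (φ_c + φ_r)(x̄)·φ_l(x) + φ_l(x̄)·φ_r(x) for x ∈ dom(φ_l) ∩ dom(φ_r) and ψ(x) := +∞ otherwise. -/
open Filter Topology Set
open scoped Classical

noncomputable section

variable {n : ℕ}

/-- The product function `Φ(x) = φ_l(x) (φ_c(x) + φ_r(x))` on the intersection of the
domains, and `+∞` outside. -/
def PhiProd (φl φc φr : En n → EReal) (x : En n) : EReal :=
  if φl x ≠ ⊤ ∧ φc x ≠ ⊤ ∧ φr x ≠ ⊤ then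
    (((φl x).toReal * ((φc x).toReal + (φr x).toReal) : ℝ) : EReal) else ⊤

/-- The function `ψ(x) = (φ_c + φ_r)(x̄) φ_l(x) + φ_l(x̄) φ_r(x)` on
`dom φ_l ∩ dom φ_r`, and `+∞` outside. -/
def PsiProd (φl φc φr : En n → EReal) (xb x : En n) : EReal :=
  if φl x ≠ ⊤ ∧ φr x ≠ ⊤ then
    ((((φc xb).toReal + (φr xb).toReal) * (φl x).toReal
        + (φl xb).toReal * (φr x).toReal : ℝ) : EReal) else ⊤

/-! Write `d = z - x̄`. On the common domain
`Φ(z) - Φ(x̄) = (ψ(z) - ψ(x̄)) + φ_l(z) (φ_c(z) - φ_c(x̄)) + (φ_l(z) - φ_l(x̄)) (φ_r(z) - φ_r(x̄))`.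
As `φ_l ≥ 0`, the subgradient inequality for `y ∈ ∂φ_c(x̄)` bounds the middle term below by
`φ_l(z) ⟪y, d⟫`, whence
`Φ(z) - Φ(x̄) ≥ ψ(z) - ψ(x̄) + φ_l(x̄) ⟪y, d⟫ + (φ_l(z) - φ_l(x̄)) (⟪y, d⟫ + φ_r(z) - φ_r(x̄))`.
The last product is `O(‖d‖) · o(1) = o(‖d‖)` by the Lipschitz continuity of `φ_l` and the
continuity of `φ_r`, so it does not affect Fréchet subgradients. -/

open Asymptotics
open scoped RealInnerProductSpace

section FrechetSubgradient

variable {E : Type*} [NormedAddCommGroup E] [InnerProductSpace ℝ E]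

def HasFrechetSubgradientWithinAt (f : E → ℝ) (y : E) (s : Set E) (x : E) : Prop :=
  ∀ ε > 0, ∀ᶠ z in 𝓝[s] x, f x + ⟪y, z - x⟫ - ε * ‖z - x‖ ≤ f z

theorem HasFrechetSubgradientWithinAt.mono {f : E → ℝ} {y : E} {s t : Set E} {x : E}
    (h : HasFrechetSubgradientWithinAt f y t x) (hst : s ⊆ t) :
    HasFrechetSubgradientWithinAt f y s x :=
  fun ε hε => nhdsWithin_mono x hst (h ε hε)

theorem HasFrechetSubgradientWithinAt.mul_add {l c r : E → ℝ} {s : Set E} {x u y : E}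
    (hu : HasFrechetSubgradientWithinAt (fun z => (c x + r x) * l z + l x * r z) u s x)
    (hy : ∀ z ∈ s, c x + ⟪y, z - x⟫ ≤ c z) (hl0 : ∀ z ∈ s, 0 ≤ l z)
    (hl : (fun z => l z - l x) =O[𝓝[s] x] (fun z => ‖z - x‖))
    (hr : Tendsto r (𝓝[s] x) (𝓝 (r x))) :
    HasFrechetSubgradientWithinAt (fun z => l z * (c z + r z)) (u + l x • y) s x := by
  intro ε hε
  have hinner : Tendsto (fun z => ⟪y, z - x⟫) (𝓝[s] x) (𝓝 0) :=
    tendsto_nhdsWithin_of_tendsto_nhds (Continuous.tendsto' (by fun_prop) x 0 (by simp))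
  have hsmall : Tendsto (fun z => ⟪y, z - x⟫ + (r z - r x)) (𝓝[s] x) (𝓝 0) := by
    simpa using hinner.add (tendsto_sub_nhds_zero_iff.2 hr)
  have herror := (hl.mul_isLittleO ((isLittleO_one_iff ℝ).2 hsmall)).bound (half_pos hε)
  filter_upwards [hu _ (half_pos hε), herror, self_mem_nhdsWithin] with z hψz herrz hz
  have hc := mul_le_mul_of_nonneg_left (hy z hz) (hl0 z hz)
  simp only [Real.norm_eq_abs, mul_one, abs_norm] at herrz
  rw [inner_add_left, real_inner_smul_left]
  linarith [neg_abs_le ((l z - l x) * (⟪y, z - x⟫ + (r z - r x)))]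

end FrechetSubgradient

theorem mem_fsubdiff_ite_iff {p : En n → Prop} [DecidablePred p] {f : En n → ℝ} {x y : En n}
    (hx : p x) :
    y ∈ fsubdiff (fun z => if p z then (f z : EReal) else ⊤) x ↔
      HasFrechetSubgradientWithinAt f y {z | p z} x := by
  simp only [fsubdiff, mem_ofPred_eq, if_pos hx, ne_eq, EReal.coe_ne_top, not_false_eq_true,
    true_and, HasFrechetSubgradientWithinAt, eventually_nhdsWithin_iff]
  refine forall₂_congr fun ε _ => eventually_congr (Eventually.of_forall fun z => ?_)
  by_cases hz : p z
  · simp only [hz, if_true, true_imp_iff, ← EReal.coe_add, EReal.coe_le_coe_iff, add_sub_assoc]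
  · simp [hz]

theorem toReal_add_inner_le_of_mem_eSubdiff {φ : En n → EReal} {x y z : En n}
    (hy : y ∈ eSubdiff φ x) (hx : φ x ≠ ⊤) (hx' : φ x ≠ ⊥) (hz : φ z ≠ ⊤) :
    (φ x).toReal + ⟪y, z - x⟫ ≤ (φ z).toReal := by
  have h := hy z
  rw [← EReal.coe_toReal hx hx', ← EReal.coe_add] at h
  have hz' : φ z ≠ ⊥ := ne_bot_of_le_ne_bot (EReal.coe_ne_bot _) h
  rwa [← EReal.coe_toReal hz hz', EReal.coe_le_coe_iff] at h

theorem statement15_general (φl φc φr : En n → EReal) (xb : En n)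
    (hbotc : ∀ x, φc x ≠ ⊥)
    (hdoml : φl xb ≠ ⊤) (hdomc : φc xb ≠ ⊤) (hdomr : φr xb ≠ ⊤)
    (hl0 : ∀ x, 0 ≤ φl x)
    (hlLip : ∃ δ > (0 : ℝ), ∃ L : ℝ, ∀ u v : En n, ‖u - xb‖ < δ → ‖v - xb‖ < δ →
        φl u ≠ ⊤ → φl v ≠ ⊤ → |(φl u).toReal - (φl v).toReal| ≤ L * ‖u - v‖)
    (hrcont : ∀ ε : ℝ, 0 < ε → ∃ δ > (0 : ℝ), ∀ z : En n, ‖z - xb‖ < δ → φr z ≠ ⊤ →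
        |(φr z).toReal - (φr xb).toReal| < ε) :
    ∀ u ∈ fsubdiff (PsiProd φl φc φr xb) xb, ∀ y ∈ eSubdiff φc xb,
      u + (φl xb).toReal • y ∈ fsubdiff (PhiProd φl φc φr) xb := by
  intro u hu y hy
  set S := {z | φl z ≠ ⊤ ∧ φc z ≠ ⊤ ∧ φr z ≠ ⊤}
  have hl : (fun z => (φl z).toReal - (φl xb).toReal) =O[𝓝[S] xb] (fun z => ‖z - xb‖) := by
    obtain ⟨δ, hδ, L, hL⟩ := hlLip
    refine IsBigO.of_bound L ?_
    filter_upwards [inter_mem_nhdsWithin S (Metric.ball_mem_nhds xb hδ)] with z ⟨hzS, hz⟩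
    simpa using hL z xb (mem_ball_iff_norm.1 hz) (by simpa) hzS.1 hdoml
  have hr : Tendsto (fun z => (φr z).toReal) (𝓝[S] xb) (𝓝 (φr xb).toReal) :=
    Metric.tendsto_nhdsWithin_nhds.2 fun ε hε => (hrcont ε hε).imp fun _ ⟨hδ, h⟩ =>
      ⟨hδ, fun z hz hzd => h z (by rwa [dist_eq_norm] at hzd) hz.2.2⟩
  have hψ := ((mem_fsubdiff_ite_iff ⟨hdoml, hdomr⟩).1 hu).mono (s := S)
    fun z hz => ⟨hz.1, hz.2.2⟩
  exact (mem_fsubdiff_ite_iff ⟨hdoml, hdomc, hdomr⟩).2 <| hψ.mul_add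
    (fun z hz => toReal_add_inner_le_of_mem_eSubdiff hy hdomc (hbotc xb) hz.2.1)
    (fun z _ => EReal.toReal_nonneg (hl0 z)) hl hr

/-- generalized product rule for the Fréchet subdifferential:
`∂̂Φ(x̄) ⊇ ∂̂ψ(x̄) + φ_l(x̄) ∂φ_c(x̄)`. -/
theorem statement15 (φl φc φr : En n → EReal) (xb : En n)
    (hbotl : ∀ x, φl x ≠ ⊥) (hbotc : ∀ x, φc x ≠ ⊥) (hbotr : ∀ x, φr x ≠ ⊥)
    (hdoml : φl xb ≠ ⊤) (hdomc : φc xb ≠ ⊤) (hdomr : φr xb ≠ ⊤)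
    (hl0 : ∀ x, 0 ≤ φl x)
    (hlLip : ∃ δ > (0 : ℝ), ∃ L : ℝ, ∀ u v : En n, ‖u - xb‖ < δ → ‖v - xb‖ < δ →
        φl u ≠ ⊤ → φl v ≠ ⊤ → |(φl u).toReal - (φl v).toReal| ≤ L * ‖u - v‖)
    (hcconv : ∀ u v : En n, ∀ t : ℝ, 0 ≤ t → t ≤ 1 →
        φc (t • u + (1 - t) • v) ≤ ((t : ℝ) : EReal) * φc u + (((1 - t : ℝ)) : EReal) * φc v)
    (hcsub : (eSubdiff φc xb).Nonempty)
    (hrcont : ∀ ε : ℝ, 0 < ε → ∃ δ > (0 : ℝ), ∀ z : En n, ‖z - xb‖ < δ → φr z ≠ ⊤ →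
        |(φr z).toReal - (φr xb).toReal| < ε) :
    ∀ u ∈ fsubdiff (PsiProd φl φc φr xb) xb, ∀ y ∈ eSubdiff φc xb,
      u + (φl xb).toReal • y ∈ fsubdiff (PhiProd φl φc φr) xb :=
  statement15_general φl φc φr xb hbotc hdoml hdomc hdomr hl0 hlLip hrcont
end
end
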